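/- Let k be a field of characteristic 2 and 1 ≤ m < n. Let R = k[x_1,…,x_m,y_1,…,y_m] ⊆ S = k[x_1,…,x_n,y_1,…,y_n], let 𝔪 = ({x_i, y_i : 1 ≤ i ≤ m}) ⊆ R, 𝔫 = ({x_i, y_i : m+1 ≤ i ≤ n}) ⊆ S, and let M = ({x_i, y_i : 1 ≤ i ≤ n}) be the graded maximal ideal of S. Let G be a finite simple graph on {1,…,n} and H its induced subgraph on {1,…,m}, with binomial edge ideals J_G ⊆ S and J_H ⊆ R. Let A ⊆ {m+1,…,n} and B ⊆ {1,…,n}∖A, set Q = P(A,B) ⊆ S, B′ = B ∩ {1,…,m}, and Q′ = P(∅,B′) ⊆ R. Suppose Q is a minimal prime of J_G, let 𝒞 be a set of minimal primes of J_G not containing Q as an element, and let K be an ideal of R such that ⋂_{P ∈ 𝒞} (P^{[2]} :_S J_G) ⊆ K·S + 𝔫^{[2]}. If K ∩ (Q′^{[2]} :_R J_H) ⊆ 𝔪^{[2]}, then J_G^{[2]} :_S J_G ⊆ M^{[2]}; in particular, by Fedder's criterion, S/J_G is not F-pure. -/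

import Mathlib

open MvPolynomial

noncomputable section

namespace BEI

/-- The polynomial ring `k[x_1,…,x_n,y_1,…,y_n]`: variables `Sum.inl i` are the `x_i`,
variables `Sum.inr i` are the `y_i`. -/
abbrev Ring' (k : Type*) [CommRing k] (n : ℕ) : Type _ := MvPolynomial (Fin n ⊕ Fin n) k

variable {k : Type*} [CommRing k] {n : ℕ}

/-- The variable `x_i`. -/
def xv (i : Fin n) : Ring' k n := X (Sum.inl i)

/-- The variable `y_i`. -/
def yv (i : Fin n) : Ring' k n := X (Sum.inr i)

/-- The binomial `f_{i,j} = x_i y_j - x_j y_i`. -/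
def fb (i j : Fin n) : Ring' k n := xv i * yv j - xv j * yv i

/-- The binomial edge ideal `J_G` of a graph `G` on `{1,…,n}`. -/
def beIdeal (G : SimpleGraph (Fin n)) : Ideal (Ring' k n) :=
  Ideal.span {g | ∃ i j, G.Adj i j ∧ g = fb i j}

/-- The Frobenius power `I^{[p]}`, the ideal generated by the `p`-th powers of all
elements of `I`. -/
def frobPow {A : Type*} [CommSemiring A] (I : Ideal A) (p : ℕ) : Ideal A :=
  Ideal.span ((· ^ p) '' (I : Set A))

/-- The graded maximal ideal `(x_1,…,x_n,y_1,…,y_n)`. -/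
def maxIdeal (k : Type*) [CommRing k] (n : ℕ) : Ideal (Ring' k n) :=
  Ideal.span (Set.range (X : (Fin n ⊕ Fin n) → Ring' k n))

/-- The ideal `P(A,B)`, generated by `{x_i, y_i : i ∈ A}` together with all `f_{a,b}` for
distinct `a, b ∈ B`. -/
def PAB (A B : Finset (Fin n)) : Ideal (Ring' k n) :=
  Ideal.span
    ({g | ∃ i ∈ A, g = xv i ∨ g = yv i} ∪
      {g | ∃ a ∈ B, ∃ b ∈ B, a ≠ b ∧ g = fb a b})

/-- The inclusion of polynomial rings
`R = k[x_1,…,x_m,y_1,…,y_m] → S = k[x_1,…,x_n,y_1,…,y_n]` (for `m ≤ n`). -/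
def incl (k : Type*) [CommRing k] (m n : ℕ) (h : m ≤ n) :
    Ring' k m →+* Ring' k n :=
  (rename (Sum.map (Fin.castLE h) (Fin.castLE h))).toRingHom

/-- The ideal `𝔫 = ({x_i, y_i : m+1 ≤ i ≤ n})` of `S` (with `0`-based indexing: indices
`i` with `m ≤ i`). -/
def nIdeal (k : Type*) [CommRing k] (m n : ℕ) : Ideal (Ring' k n) :=
  Ideal.span {g | ∃ i : Fin n, m ≤ (i : ℕ) ∧
    (g = X (Sum.inl i) ∨ g = X (Sum.inr i))}

/-- The ideal `Q' = P(∅, B')` of `R = k[x_1,…,x_m,y_1,…,y_m]`, where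
`B' = B ∩ {1,…,m}`. -/
def Qprime (k : Type*) [CommRing k] (m n : ℕ) (h : m ≤ n) (B : Finset (Fin n)) :
    Ideal (Ring' k m) :=
  Ideal.span {g | ∃ a b : Fin m, Fin.castLE h a ∈ B ∧ Fin.castLE h b ∈ B ∧ a ≠ b ∧
    g = fb a b}
/-!
Write `S = R[x_i, y_i : i > m]`; the coefficients of an element of `S` at the monomials that are
squarefree in these outer variables vanish on `𝔫^{[2]}`. Let `f ∈ J_G^{[2]} :_S J_G`. As `J_G ⊆ P`
for `P = Q` and for every `P ∈ 𝒞`, `f ∈ P^{[2]} :_S J_G`, so every squarefree coefficient of `f`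
lies in `K`. In characteristic `2`, `f_{a,b}^2 = x_a^2 y_b^2 + x_b^2 y_a^2`, hence
`Q^{[2]} ⊆ Q'^{[2]} S + 𝔫^{[2]}` because `A` consists of outer indices; multiplying by
`J_H ⊆ J_G` shows that the squarefree coefficients also lie in `Q'^{[2]} :_R J_H`, hence in
`𝔪^{[2]}`. All other monomials are divisible by the square of an outer variable, so
`f ∈ 𝔪^{[2]} S + 𝔫^{[2]} = M^{[2]}`.
-/

section FrobeniusPower

variable {A B : Type*} [CommSemiring A] [CommSemiring B]

theorem pow_mem_frobPow {I : Ideal A} {a : A} (ha : a ∈ I) (p : ℕ) : a ^ p ∈ frobPow I p :=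
  Ideal.subset_span ⟨a, ha, rfl⟩

theorem frobPow_mono {I J : Ideal A} (hIJ : I ≤ J) (p : ℕ) : frobPow I p ≤ frobPow J p :=
  Ideal.span_mono (Set.image_mono hIJ)

theorem frobPow_eq_map_frobenius (p : ℕ) [ExpChar A p] (I : Ideal A) :
    frobPow I p = I.map (frobenius A p) :=
  rfl

theorem map_frobPow_span_le (p : ℕ) [ExpChar A p] {F : Type*} [FunLike F A B]
    [RingHomClass F A B] (f : F) {T : Set A} {J : Ideal B} (hT : ∀ t ∈ T, f t ^ p ∈ J) :
    (frobPow (Ideal.span T) p).map f ≤ J := by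
  rw [Ideal.map_le_iff_le_comap, frobPow_eq_map_frobenius, Ideal.map_span, Ideal.span_le]
  rintro _ ⟨t, ht, rfl⟩
  rw [SetLike.mem_coe, Ideal.mem_comap, frobenius_def, map_pow]
  exact hT t ht

end FrobeniusPower

section SquaresOfVariables

variable {σ R : Type*} [CommSemiring R]

variable (σ R) in
def sqVarIdeal : Ideal (MvPolynomial σ R) :=
  Ideal.span (Set.range fun t : σ => X t ^ 2)

theorem coeff_eq_zero_of_mem_sqVarIdeal {g : MvPolynomial σ R} (hg : g ∈ sqVarIdeal σ R)
    {d : σ →₀ ℕ} (hd : ∀ t, d t ≤ 1) : coeff d g = 0 := by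
  have hmon : (fun t : σ => (X t : MvPolynomial σ R) ^ 2)
      = (fun s => monomial s (1 : R)) ∘ fun t => Finsupp.single t 2 :=
    funext fun t => X_pow_eq_monomial ..
  rw [sqVarIdeal, hmon, Set.range_comp, mem_ideal_span_monomial_image] at hg
  by_contra hne
  obtain ⟨_, ⟨t, rfl⟩, hle⟩ := hg d (mem_support_iff.mpr hne)
  have h2 : 2 ≤ d t := by simpa using hle t
  exact absurd (hd t) (by omega)

theorem mem_map_C_sup_sqVarIdeal_iff {R : Type*} [CommRing R] {I : Ideal R} {g : MvPolynomial σ R} :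
    g ∈ I.map C ⊔ sqVarIdeal σ R ↔ ∀ d : σ →₀ ℕ, (∀ t, d t ≤ 1) → coeff d g ∈ I := by
  constructor
  · rintro hg d hd
    obtain ⟨a, ha, b, hb, rfl⟩ := Submodule.mem_sup.mp hg
    rw [coeff_add, coeff_eq_zero_of_mem_sqVarIdeal hb hd, add_zero]
    exact mem_map_C_iff.mp ha d
  · intro hcoeff
    rw [as_sum g]
    refine Ideal.sum_mem _ fun d _ => ?_
    by_cases hd : ∀ t, d t ≤ 1
    · rw [← mul_one (coeff d g), ← C_mul_monomial]
      exact Ideal.mem_sup_left (Ideal.mul_mem_right _ _ (Ideal.mem_map_of_mem _ (hcoeff d hd)))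
    · push Not at hd
      obtain ⟨t, ht⟩ := hd
      have h2 : Finsupp.single t 2 ≤ d := Finsupp.single_le_iff.mpr ht
      rw [show monomial d (coeff d g)
          = X t ^ 2 * monomial (d - Finsupp.single t 2) (coeff d g) by
        rw [X_pow_eq_monomial, monomial_mul, one_mul, add_tsub_cancel_of_le h2]]
      exact Ideal.mem_sup_right (Ideal.mul_mem_right _ _ (Ideal.subset_span ⟨t, rfl⟩))

end SquaresOfVariables

section SplitVariables

variable {α β : Type*} {ι : α → β}

open Classical in
def splitVarsEquiv (hι : Function.Injective ι) : β ≃ ↥(Set.range ι)ᶜ ⊕ α :=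
  (Equiv.Set.sumCompl (Set.range ι)).symm.trans <|
    (Equiv.sumComm _ _).trans <| Equiv.sumCongr (Equiv.refl _) (Equiv.ofInjective ι hι).symm

theorem splitVarsEquiv_apply_of_notMem (hι : Function.Injective ι) (v : ↥(Set.range ι)ᶜ) :
    splitVarsEquiv hι v = Sum.inl v := by
  classical
  simp [splitVarsEquiv, Equiv.Set.sumCompl_symm_apply_of_notMem v.2]

theorem splitVarsEquiv_apply (hι : Function.Injective ι) (a : α) :
    splitVarsEquiv hι (ι a) = Sum.inr a := by
  classical
  simp [splitVarsEquiv, Equiv.Set.sumCompl_symm_apply_of_mem (Set.mem_range_self a)]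

variable (R : Type*) [CommSemiring R]

def splitAlgEquiv (hι : Function.Injective ι) :
    MvPolynomial β R ≃ₐ[R] MvPolynomial ↥(Set.range ι)ᶜ (MvPolynomial α R) :=
  (renameEquiv R (splitVarsEquiv hι)).trans (sumAlgEquiv R _ _)

theorem splitAlgEquiv_X_of_notMem (hι : Function.Injective ι) {v : β} (hv : v ∉ Set.range ι) :
    splitAlgEquiv R hι (X v) = X ⟨v, hv⟩ := by
  simp [splitAlgEquiv, splitVarsEquiv_apply_of_notMem hι ⟨v, hv⟩]

theorem splitAlgEquiv_rename (hι : Function.Injective ι) (p : MvPolynomial α R) :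
    splitAlgEquiv R hι (rename ι p) = C p := by
  induction p using MvPolynomial.induction_on with
  | C a => simp [splitAlgEquiv]
  | add p q hp hq => simp [hp, hq]
  | mul_X p a hp =>
    rw [map_mul, rename_X, map_mul, hp]
    simp [splitAlgEquiv, splitVarsEquiv_apply]

end SplitVariables

section InnerOuter

variable (k : Type*) [CommRing k] {m n : ℕ} (h : m ≤ n)

def innerVar : Fin m ⊕ Fin m → Fin n ⊕ Fin n :=
  Sum.map (Fin.castLE h) (Fin.castLE h)

theorem innerVar_injective : Function.Injective (innerVar h) :=
  Sum.map_injective.mpr ⟨Fin.castLE_injective h, Fin.castLE_injective h⟩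

theorem notMem_range_innerVar {v : Fin n ⊕ Fin n}
    (hv : m ≤ (Sum.elim Fin.val Fin.val v : ℕ)) : v ∉ Set.range (innerVar h) := by
  rintro ⟨a | a, rfl⟩ <;> simp [innerVar] at hv <;> omega

abbrev OuterVar : Type :=
  ↥(Set.range (innerVar h))ᶜ

def outerPolyEquiv : Ring' k n ≃+* MvPolynomial (OuterVar h) (Ring' k m) :=
  (splitAlgEquiv k (innerVar_injective h)).toRingEquiv

theorem outerPolyEquiv_incl (r : Ring' k m) : outerPolyEquiv k h (incl k m n h r) = C r :=
  splitAlgEquiv_rename k _ r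

theorem outerPolyEquiv_X_of_notMem {v : Fin n ⊕ Fin n} (hv : v ∉ Set.range (innerVar h)) :
    outerPolyEquiv k h (X v) = X ⟨v, hv⟩ :=
  splitAlgEquiv_X_of_notMem k _ hv

theorem outerPolyEquiv_sq_mem_sqVarIdeal {i : Fin n} (hi : m ≤ (i : ℕ)) {g : Ring' k n}
    (hg : g = xv i ∨ g = yv i) : outerPolyEquiv k h g ^ 2 ∈ sqVarIdeal _ _ := by
  rcases hg with rfl | rfl
  · rw [xv, outerPolyEquiv_X_of_notMem k h (notMem_range_innerVar h (v := Sum.inl i) hi)]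
    exact Ideal.subset_span ⟨_, rfl⟩
  · rw [yv, outerPolyEquiv_X_of_notMem k h (notMem_range_innerVar h (v := Sum.inr i) hi)]
    exact Ideal.subset_span ⟨_, rfl⟩

theorem map_incl_beIdeal_comap_le (G : SimpleGraph (Fin n)) :
    (beIdeal (k := k) (G.comap (Fin.castLE h))).map (incl k m n h) ≤ beIdeal G := by
  rw [beIdeal, Ideal.map_span, Ideal.span_le]
  rintro _ ⟨_, ⟨i, j, hij, rfl⟩, rfl⟩
  exact Ideal.subset_span ⟨_, _, hij, by simp [fb, xv, yv, incl]⟩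

theorem fb_sq [CharP k 2] (i j : Fin n) :
    fb (k := k) i j ^ 2 = xv i ^ 2 * yv j ^ 2 + xv j ^ 2 * yv i ^ 2 := by
  rw [fb, CharTwo.sub_eq_add, CharTwo.add_sq, mul_pow, mul_pow]

variable [CharP k 2]

theorem map_outerPolyEquiv_map_incl_sup_frobPow_nIdeal_le (K : Ideal (Ring' k m)) :
    (K.map (incl k m n h) ⊔ frobPow (nIdeal k m n) 2).map (outerPolyEquiv k h)
      ≤ K.map C ⊔ sqVarIdeal _ _ := by
  rw [Ideal.map_sup]
  refine sup_le_sup ?_ (map_frobPow_span_le 2 _ ?_)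
  · refine Ideal.map_le_iff_le_comap.mpr (Ideal.map_le_iff_le_comap.mpr fun r hr => ?_)
    rw [Ideal.mem_comap, Ideal.mem_comap, outerPolyEquiv_incl]
    exact Ideal.mem_map_of_mem C hr
  · rintro _ ⟨i, hi, hg⟩
    exact outerPolyEquiv_sq_mem_sqVarIdeal k h hi hg

theorem map_outerPolyEquiv_frobPow_PAB_le {A B : Finset (Fin n)}
    (hA : ∀ i ∈ A, m ≤ (i : ℕ)) :
    (frobPow (PAB (k := k) A B) 2).map (outerPolyEquiv k h)
      ≤ (frobPow (Qprime k m n h B) 2).map C ⊔ sqVarIdeal _ _ := by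
  refine map_frobPow_span_le 2 _ ?_
  rintro _ (⟨i, hi, hg⟩ | ⟨a, ha, b, hb, hab, rfl⟩)
  · exact Ideal.mem_sup_right (outerPolyEquiv_sq_mem_sqVarIdeal k h (hA i hi) hg)
  by_cases hinner : (a : ℕ) < m ∧ (b : ℕ) < m
  · have hfb : fb a b = incl k m n h (fb ⟨a, hinner.1⟩ ⟨b, hinner.2⟩) := by
      simp [fb, xv, yv, incl]
    rw [hfb, outerPolyEquiv_incl, ← map_pow]
    refine Ideal.mem_sup_left (Ideal.mem_map_of_mem _ (pow_mem_frobPow ?_ 2))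
    exact Ideal.subset_span
      ⟨⟨a, hinner.1⟩, ⟨b, hinner.2⟩, ha, hb, fun e => hab (Fin.ext (Fin.mk.inj e)), rfl⟩
  · apply Ideal.mem_sup_right
    rw [← map_pow, fb_sq, map_add, map_mul, map_mul, map_pow, map_pow, map_pow, map_pow]
    rcases (by omega : m ≤ (a : ℕ) ∨ m ≤ (b : ℕ)) with hma | hmb
    · exact add_mem
        (Ideal.mul_mem_right _ _ (outerPolyEquiv_sq_mem_sqVarIdeal k h hma (.inl rfl)))
        (Ideal.mul_mem_left _ _ (outerPolyEquiv_sq_mem_sqVarIdeal k h hma (.inr rfl)))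
    · exact add_mem
        (Ideal.mul_mem_left _ _ (outerPolyEquiv_sq_mem_sqVarIdeal k h hmb (.inr rfl)))
        (Ideal.mul_mem_right _ _ (outerPolyEquiv_sq_mem_sqVarIdeal k h hmb (.inl rfl)))

theorem map_C_frobPow_maxIdeal_sup_le :
    (frobPow (maxIdeal k m) 2).map C ⊔ sqVarIdeal _ _
      ≤ (frobPow (maxIdeal k n) 2).map (outerPolyEquiv k h) := by
  have hsq : ∀ x ∈ maxIdeal k n,
      outerPolyEquiv k h x ^ 2 ∈ (frobPow (maxIdeal k n) 2).map (outerPolyEquiv k h) := by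
    intro x hx
    rw [← map_pow]
    exact Ideal.mem_map_of_mem _ (pow_mem_frobPow hx 2)
  refine sup_le (map_frobPow_span_le 2 C ?_) ?_
  · rintro _ ⟨a, rfl⟩
    rw [← outerPolyEquiv_incl, incl, AlgHom.toRingHom_eq_coe, RingHom.coe_coe, rename_X]
    exact hsq _ (Ideal.subset_span ⟨_, rfl⟩)
  · rw [sqVarIdeal, Ideal.span_le]
    rintro _ ⟨⟨v, hv⟩, rfl⟩
    dsimp only
    rw [← outerPolyEquiv_X_of_notMem k h hv]
    exact hsq _ (Ideal.subset_span ⟨v, rfl⟩)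

theorem coeff_outerPolyEquiv_mem_colon {G : SimpleGraph (Fin n)} {A B : Finset (Fin n)}
    (hA : ∀ i ∈ A, m ≤ (i : ℕ)) {f : Ring' k n}
    (hf : f ∈ (frobPow (PAB (k := k) A B) 2).colon (beIdeal (k := k) G))
    {d : OuterVar h →₀ ℕ} (hd : ∀ t, d t ≤ 1) :
    coeff d (outerPolyEquiv k h f)
      ∈ (frobPow (Qprime k m n h B) 2).colon (beIdeal (k := k) (G.comap (Fin.castLE h))) := by
  refine Submodule.mem_colon.mpr fun g hg => ?_
  have hgf : incl k m n h g * f ∈ frobPow (PAB (k := k) A B) 2 := by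
    rw [mul_comm]
    exact Submodule.mem_colon.mp hf _
      (map_incl_beIdeal_comap_le k h G (Ideal.mem_map_of_mem _ hg))
  have hprod := map_outerPolyEquiv_frobPow_PAB_le k h hA
    (Ideal.mem_map_of_mem (outerPolyEquiv k h) hgf)
  rw [map_mul, outerPolyEquiv_incl] at hprod
  rw [smul_eq_mul, mul_comm, ← coeff_C_mul]
  exact mem_map_C_sup_sqVarIdeal_iff.mp hprod d hd

end InnerOuter

theorem reduction_step_fedder_general (k : Type*) [Field k] [CharP k 2]
    (m n : ℕ) (hmn : m < n)
    (G : SimpleGraph (Fin n))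
    (A B : Finset (Fin n))
    (hA : ∀ i ∈ A, m ≤ (i : ℕ))
    (hQmin : PAB (k := k) A B ∈ (beIdeal (k := k) G).minimalPrimes)
    (𝒞 : Set (Ideal (Ring' k n)))
    (h𝒞 : 𝒞 ⊆ (beIdeal (k := k) G).minimalPrimes)
    (K : Ideal (Ring' k m))
    (hK : (⨅ P ∈ 𝒞, Submodule.colon (frobPow P 2) (beIdeal (k := k) G))
        ≤ Ideal.map (incl k m n hmn.le) K ⊔ frobPow (nIdeal k m n) 2)
    (hfin : K ⊓ Submodule.colon (frobPow (Qprime k m n hmn.le B) 2)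
          (beIdeal (k := k) (G.comap (Fin.castLE hmn.le)))
        ≤ frobPow (maxIdeal k m) 2) :
    Submodule.colon (frobPow (beIdeal (k := k) G) 2) (beIdeal (k := k) G)
      ≤ frobPow (maxIdeal k n) 2 := by
  intro f hf
  have hcolon : ∀ {P}, beIdeal G ≤ P → f ∈ (frobPow P 2).colon (beIdeal (k := k) G) :=
    fun hP => Submodule.colon_mono (frobPow_mono hP 2) subset_rfl hf
  have hf𝒞 : f ∈ ⨅ P ∈ 𝒞, (frobPow P 2).colon (beIdeal (k := k) G) := by
    simp only [Submodule.mem_iInf]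
    exact fun P hP => hcolon (h𝒞 hP).1.2
  have hfK := map_outerPolyEquiv_map_incl_sup_frobPow_nIdeal_le k hmn.le K
    (Ideal.mem_map_of_mem _ (hK hf𝒞))
  rw [← Ideal.apply_mem_of_equiv_iff (f := outerPolyEquiv k hmn.le)]
  refine map_C_frobPow_maxIdeal_sup_le k hmn.le (mem_map_C_sup_sqVarIdeal_iff.mpr fun d hd => ?_)
  exact hfin ⟨mem_map_C_sup_sqVarIdeal_iff.mp hfK d hd,
    coeff_outerPolyEquiv_mem_colon k hmn.le hA (hcolon hQmin.1.2) hd⟩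

/-- the reduction step for Fedder's criterion.  With
`S = k[x_1,…,x_n,y_1,…,y_n] ⊇ R = k[x_1,…,x_m,y_1,…,y_m]` in characteristic `2`, `H` the
induced subgraph of `G` on `{1,…,m}`, `A ⊆ {m+1,…,n}`, `B` disjoint from `A`,
`Q = P(A,B)` a minimal prime of `J_G`, `𝒞` a set of minimal primes of `J_G` not
containing `Q`, and `K ⊆ R` an ideal with `⋂_{P ∈ 𝒞} (P^{[2]} :_S J_G) ⊆ KS + 𝔫^{[2]}`:
if `K ∩ (Q'^{[2]} :_R J_H) ⊆ 𝔪^{[2]}`, then `J_G^{[2]} :_S J_G ⊆ M^{[2]}` (so `S/J_G` is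
not F-pure by Fedder's criterion). -/
theorem reduction_step_fedder (k : Type*) [Field k] [CharP k 2]
    (m n : ℕ) (hm : 1 ≤ m) (hmn : m < n)
    (G : SimpleGraph (Fin n))
    (A B : Finset (Fin n))
    (hA : ∀ i ∈ A, m ≤ (i : ℕ))
    (hAB : Disjoint A B)
    (hQmin : PAB (k := k) A B ∈ (beIdeal (k := k) G).minimalPrimes)
    (𝒞 : Set (Ideal (Ring' k n)))
    (h𝒞 : 𝒞 ⊆ (beIdeal (k := k) G).minimalPrimes)
    (hQnot : PAB (k := k) A B ∉ 𝒞)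
    (K : Ideal (Ring' k m))
    (hK : (⨅ P ∈ 𝒞, Submodule.colon (frobPow P 2) (beIdeal (k := k) G))
        ≤ Ideal.map (incl k m n hmn.le) K ⊔ frobPow (nIdeal k m n) 2)
    (hfin : K ⊓ Submodule.colon (frobPow (Qprime k m n hmn.le B) 2)
          (beIdeal (k := k) (G.comap (Fin.castLE hmn.le)))
        ≤ frobPow (maxIdeal k m) 2) :
    Submodule.colon (frobPow (beIdeal (k := k) G) 2) (beIdeal (k := k) G)
      ≤ frobPow (maxIdeal k n) 2 :=
  reduction_step_fedder_general k m n hmn G A B hA hQmin 𝒞 h𝒞 K hK hfin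

end BEI
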